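/- In the asymptotic regime, let f : ℝ → ℝ be three times continuously differentiable with f', f'' and f''' bounded. For x ∈ ℝ define G_N f(x) := β_N(x)·( f(x + 1/σ_N) − f(x) ) + δ_N(x)·( f(x − 1/σ_N) − f(x) ). Then for every x ∈ ℝ, G_N f(x) → −x·f'(x) + (1/2)·f''(x) as N → ∞. -/

import Mathlib

open Real Filter Set

/-- Birth rate `λ_n` of the two-type Moran model. -/
noncomputable def lamR (N : ℕ) (s : ℝ) (n : ℕ) : ℝ :=
  (n:ℝ) * ((1/2) * (1 - (n:ℝ)/(N:ℝ)) + s * (1 - (n:ℝ)/(N:ℝ)))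

/-- Death rate `μ_n` of the two-type Moran model. -/
noncomputable def muR (N : ℕ) (m : ℝ) (n : ℕ) : ℝ :=
  (n:ℝ) * ((1/2) * (1 - (n:ℝ)/(N:ℝ)) + m)

/-- Odds-ratio products `r_l = ∏_{i=1}^l μ_i/λ_i`. -/
noncomputable def rR (N : ℕ) (m s : ℝ) (l : ℕ) : ℝ :=
  ∏ i ∈ Finset.Icc 1 l, muR N m i / lamR N s i

/-- Potential `U(n) = ∑_{ℓ=1}^n log(μ_ℓ/λ_ℓ)`. -/
noncomputable def UR (N : ℕ) (m s : ℝ) (n : ℕ) : ℝ :=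
  ∑ l ∈ Finset.Icc 1 n, Real.log (muR N m l / lamR N s l)

/-- `R_k = ∑_{i=0}^{k-1} r_i`. -/
noncomputable def RRk (N : ℕ) (m s : ℝ) (k : ℕ) : ℝ :=
  ∑ i ∈ Finset.range k, rR N m s i

/-- Center of attraction `𝔞 = N(1-ρ)`. -/
noncomputable def aN (N : ℕ) (m s : ℝ) : ℝ := (N:ℝ) * (1 - m/s)

/-- Critical size `𝔠 = 1/(s-m)`. -/
noncomputable def cN (m s : ℝ) : ℝ := 1/(s - m)

/-- `u = N m (1-ρ)²`. -/
noncomputable def uN (N : ℕ) (m s : ℝ) : ℝ := (N:ℝ) * m * (1 - m/s)^2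

/-- Fluctuation scale `σ = (1/s)√(Nm)`. -/
noncomputable def sigN (N : ℕ) (m s : ℝ) : ℝ := (1/s) * Real.sqrt ((N:ℝ) * m)

/-- Rescaled upward jump rate `β_N(x)`. -/
noncomputable def betaN (N : ℕ) (m s x : ℝ) : ℝ :=
  ((m/s)/(m*(1-m/s))) * (Real.sqrt ((m/s)*(N:ℝ)/s) * x + (N:ℝ)*(1-m/s)) *
    (1/2 + m/(m/s)) * ((m/s) - x * Real.sqrt (m/s) / Real.sqrt (s*(N:ℝ)))

/-- Rescaled downward jump rate `δ_N(x)`. -/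
noncomputable def deltaN (N : ℕ) (m s x : ℝ) : ℝ :=
  ((m/s)/(m*(1-m/s))) * (Real.sqrt ((m/s)*(N:ℝ)/s) * x + (N:ℝ)*(1-m/s)) *
    ((1/2) * ((m/s) - x * Real.sqrt (m/s) / Real.sqrt (s*(N:ℝ))) + m)

/- auxiliary definitions and lemmas -/

noncomputable def ttF (m : ℕ → ℝ) (N : ℕ) : ℝ := Real.sqrt ((N:ℝ) * m N)
noncomputable def hhF (m s : ℕ → ℝ) (N : ℕ) : ℝ := s N / ttF m N
noncomputable def aaF (m s : ℕ → ℝ) (N : ℕ) : ℝ := ttF m N / (s N * N * (1 - m N / s N))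
noncomputable def ccF (m : ℕ → ℝ) (N : ℕ) : ℝ := 1 / ttF m N
noncomputable def BBF (m s : ℕ → ℝ) (x : ℝ) (N : ℕ) : ℝ :=
  (1/2 + s N) * (1 - x * ccF m N) * (1 + x * aaF m s N)
noncomputable def DDF (m s : ℕ → ℝ) (x : ℝ) (N : ℕ) : ℝ :=
  ((1/2) * (1 - x * ccF m N) + s N) * (1 + x * aaF m s N)
noncomputable def EPF (f : ℝ → ℝ) (m s : ℕ → ℝ) (x : ℝ) (N : ℕ) : ℝ :=
  (f (x + hhF m s N) - f x - hhF m s N * deriv f x - (hhF m s N)^2/2 * deriv (deriv f) x)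
    / (hhF m s N)^2
noncomputable def EMF (f : ℝ → ℝ) (m s : ℕ → ℝ) (x : ℝ) (N : ℕ) : ℝ :=
  (f (x - hhF m s N) - f x + hhF m s N * deriv f x - (hhF m s N)^2/2 * deriv (deriv f) x)
    / (hhF m s N)^2

lemma my_sqrt_atTop : Filter.Tendsto Real.sqrt Filter.atTop Filter.atTop := by
  apply Filter.tendsto_atTop_atTop.2
  intro b
  refine ⟨b ^ 2, fun a ha => ?_⟩
  calc b ≤ |b| := le_abs_self b
    _ = Real.sqrt (b ^ 2) := (Real.sqrt_sq_eq_abs b).symm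
    _ ≤ Real.sqrt a := Real.sqrt_le_sqrt ha

lemma my_contdiff (f : ℝ → ℝ) (hf : ContDiff ℝ 3 f) :
    Differentiable ℝ f ∧ Differentiable ℝ (deriv f) ∧ Differentiable ℝ (deriv (deriv f)) := by
  have e3 : (3 : WithTop ℕ∞) = 2 + 1 := by norm_num
  rw [e3, contDiff_succ_iff_deriv] at hf
  obtain ⟨hd0, -, hf2⟩ := hf
  have e2 : (2 : WithTop ℕ∞) = 1 + 1 := by norm_num
  rw [e2, contDiff_succ_iff_deriv] at hf2
  obtain ⟨hd1, -, hf1⟩ := hf2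
  exact ⟨hd0, hd1, hf1.differentiable one_ne_zero⟩

lemma taylor2 (f : ℝ → ℝ) (hf : ContDiff ℝ 3 f)
    (C : ℝ) (hC : ∀ y, |deriv (deriv (deriv f)) y| ≤ C) (x h : ℝ) :
    |f (x + h) - f x - h * deriv f x - h ^ 2 / 2 * deriv (deriv f) x| ≤ C * |h| ^ 3 := by
  obtain ⟨hd0, hd1, hd2⟩ := my_contdiff f hf
  have hC0 : 0 ≤ C := le_trans (abs_nonneg _) (hC 0)
  have lip : ∀ a b : ℝ, |deriv (deriv f) b - deriv (deriv f) a| ≤ C * |b - a| := by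
    intro a b
    have := Convex.norm_image_sub_le_of_norm_hasDerivWithin_le
      (f := deriv (deriv f)) (f' := deriv (deriv (deriv f))) (s := Set.univ)
      (fun y _ => ((hd2 y).hasDerivAt).hasDerivWithinAt)
      (fun y _ => hC y) convex_univ (Set.mem_univ a) (Set.mem_univ b)
    simpa [Real.norm_eq_abs] using this
  set s : Set ℝ := Set.Icc (-|h|) |h| with hs
  have hconv : Convex ℝ s := convex_Icc _ _
  have h0s : (0:ℝ) ∈ s := ⟨neg_nonpos.mpr (abs_nonneg h), abs_nonneg h⟩
  have hhs : h ∈ s := ⟨neg_abs_le h, le_abs_self h⟩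
  have hg1 : ∀ t : ℝ, HasDerivAt (fun t : ℝ => deriv f (x + t) - deriv f x - t * deriv (deriv f) x)
      (deriv (deriv f) (x + t) - deriv (deriv f) x) t := by
    intro t
    have h1 : HasDerivAt (fun t : ℝ => deriv f (x + t)) (deriv (deriv f) (x + t)) t := by
      have := (HasDerivAt.comp t ((hd1 (x + t)).hasDerivAt) ((hasDerivAt_id t).const_add x))
      simpa [Function.comp_def] using this
    exact (h1.sub_const (deriv f x)).sub (hasDerivAt_mul_const (deriv (deriv f) x))
  have bound1 : ∀ t ∈ s, ‖deriv (deriv f) (x + t) - deriv (deriv f) x‖ ≤ C * |h| := by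
    intro t ht
    have h1 : |deriv (deriv f) (x + t) - deriv (deriv f) x| ≤ C * |t| := by
      simpa using lip x (x + t)
    have h2 : |t| ≤ |h| := abs_le.mpr ⟨ht.1, ht.2⟩
    exact le_trans h1 (mul_le_mul_of_nonneg_left h2 hC0)
  have g1b : ∀ t ∈ s, ‖deriv f (x + t) - deriv f x - t * deriv (deriv f) x‖ ≤ C * |h| ^ 2 := by
    intro t ht
    have := Convex.norm_image_sub_le_of_norm_hasDerivWithin_le
      (f := fun t : ℝ => deriv f (x + t) - deriv f x - t * deriv (deriv f) x)
      (f' := fun t => deriv (deriv f) (x + t) - deriv (deriv f) x) (s := s)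
      (fun y hy => (hg1 y).hasDerivWithinAt) bound1 hconv h0s ht
    have h2 : |t| ≤ |h| := abs_le.mpr ⟨ht.1, ht.2⟩
    simp only [add_zero, zero_mul, sub_zero, mul_zero, sub_self] at this
    rw [Real.norm_eq_abs] at this ⊢
    calc |deriv f (x + t) - deriv f x - t * deriv (deriv f) x| ≤ C * |h| * ‖t - 0‖ := by
          simpa using this
      _ ≤ C * |h| * |h| := by
          rw [Real.norm_eq_abs, sub_zero]
          exact mul_le_mul_of_nonneg_left h2 (mul_nonneg hC0 (abs_nonneg h))
      _ = C * |h| ^ 2 := by ring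
  have hg : ∀ t : ℝ, HasDerivAt
      (fun t : ℝ => f (x + t) - f x - t * deriv f x - t ^ 2 / 2 * deriv (deriv f) x)
      (deriv f (x + t) - deriv f x - t * deriv (deriv f) x) t := by
    intro t
    have h1 : HasDerivAt (fun t : ℝ => f (x + t)) (deriv f (x + t)) t := by
      have := (HasDerivAt.comp t ((hd0 (x + t)).hasDerivAt) ((hasDerivAt_id t).const_add x))
      simpa [Function.comp_def] using this
    have h2 : HasDerivAt (fun t : ℝ => t ^ 2 / 2 * deriv (deriv f) x) (t * deriv (deriv f) x) t := by
      have h2a := ((hasDerivAt_pow 2 t).div_const 2).mul_const (deriv (deriv f) x)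
      norm_num at h2a
      exact h2a
    exact (((h1.sub_const (f x)).sub (hasDerivAt_mul_const (deriv f x))).sub h2)
  have final := Convex.norm_image_sub_le_of_norm_hasDerivWithin_le
      (f := fun t : ℝ => f (x + t) - f x - t * deriv f x - t ^ 2 / 2 * deriv (deriv f) x)
      (f' := fun t => deriv f (x + t) - deriv f x - t * deriv (deriv f) x) (s := s)
      (fun y hy => (hg y).hasDerivWithinAt) g1b hconv h0s hhs
  simp only [add_zero, zero_mul, sub_zero, mul_zero, sub_self, ne_eq, OfNat.ofNat_ne_zero,
    not_false_eq_true, zero_pow, zero_div] at final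
  rw [Real.norm_eq_abs, Real.norm_eq_abs] at final
  calc |f (x + h) - f x - h * deriv f x - h ^ 2 / 2 * deriv (deriv f) x| ≤ C * |h| ^ 2 * |h| := by
        simpa using final
    _ = C * |h| ^ 3 := by ring

lemma alg_beta (m s x t N : ℝ) (hm : 0 < m) (hs : m < s) (ht : 0 < t) (hN : 0 < N)
    (h2 : t ^ 2 = N * m) :
    ((m/s)/(m*(1-m/s))) * ((t/s) * x + N*(1-m/s)) * (1/2 + m/(m/s)) * ((m/s) - x * (t/(s*N)))
        * (s/t)^2
      = (1/2 + s)*(1 - x*(1/t))*(1 + x*(t/(s*N*(1-m/s)))) := by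
  have hs0 : 0 < s := hm.trans hs
  have hmne : m ≠ 0 := hm.ne'
  have hsne : s ≠ 0 := hs0.ne'
  have htne : t ≠ 0 := ht.ne'
  have h1 : 1 - m/s ≠ 0 := by
    have : m/s < 1 := (div_lt_one hs0).mpr hs
    linarith
  have hsm : s - m ≠ 0 := by linarith
  have hN' : N = t ^ 2 / m := by rw [eq_div_iff hmne]; linarith [h2]
  subst hN'
  rw [show 1 - m/s = (s-m)/s from by field_simp]
  field_simp
  ring

lemma alg_delta (m s x t N : ℝ) (hm : 0 < m) (hs : m < s) (ht : 0 < t) (hN : 0 < N)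
    (h2 : t ^ 2 = N * m) :
    ((m/s)/(m*(1-m/s))) * ((t/s) * x + N*(1-m/s)) * ((1/2) * ((m/s) - x * (t/(s*N))) + m)
        * (s/t)^2
      = ((1/2)*(1 - x*(1/t)) + s)*(1 + x*(t/(s*N*(1-m/s)))) := by
  have hs0 : 0 < s := hm.trans hs
  have hmne : m ≠ 0 := hm.ne'
  have hsne : s ≠ 0 := hs0.ne'
  have htne : t ≠ 0 := ht.ne'
  have h1 : 1 - m/s ≠ 0 := by
    have : m/s < 1 := (div_lt_one hs0).mpr hs
    linarith
  have hsm : s - m ≠ 0 := by linarith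
  have hN' : N = t ^ 2 / m := by rw [eq_div_iff hmne]; linarith [h2]
  subst hN'
  rw [show 1 - m/s = (s-m)/s from by field_simp]
  field_simp
  ring

lemma alg_T (s t x aa p q f1 f2 : ℝ) (hs : s ≠ 0) (ht : t ≠ 0) :
    ((1/2 + s)*(1 - x*(1/t))*(1 + x*aa)) / (s/t)^2 * p
      + (((1/2)*(1 - x*(1/t)) + s)*(1 + x*aa)) / (s/t)^2 * q
    = -x*(1 + x*aa)*f1
      + ((((1/2 + s)*(1 - x*(1/t))*(1 + x*aa)) + (((1/2)*(1 - x*(1/t)) + s)*(1 + x*aa)))/2)*f2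
      + ((1/2 + s)*(1 - x*(1/t))*(1 + x*aa)) * ((p - (s/t)*f1 - (s/t)^2/2*f2)/(s/t)^2)
      + (((1/2)*(1 - x*(1/t)) + s)*(1 + x*aa)) * ((q + (s/t)*f1 - (s/t)^2/2*f2)/(s/t)^2) := by
  field_simp
  ring

lemma key_eq (m s : ℕ → ℝ) (x : ℝ) (f : ℝ → ℝ) (N : ℕ) (hN : 1 ≤ N)
    (hm : 0 < m N) (hms : m N < s N) :
    betaN N (m N) (s N) x * (f (x + 1 / sigN N (m N) (s N)) - f x) +
      deltaN N (m N) (s N) x * (f (x - 1 / sigN N (m N) (s N)) - f x)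
    = -x*(1 + x*aaF m s N) * deriv f x
      + ((BBF m s x N + DDF m s x N)/2) * deriv (deriv f) x
      + BBF m s x N * EPF f m s x N + DDF m s x N * EMF f m s x N := by
  have hs0 : 0 < s N := hm.trans hms
  have hN0 : (0:ℝ) < (N:ℝ) := by exact_mod_cast hN
  have hNm : 0 < (N:ℝ) * m N := by positivity
  have ht0 : 0 < ttF m N := Real.sqrt_pos.mpr hNm
  have ht2 : ttF m N ^ 2 = (N:ℝ) * m N := Real.sq_sqrt hNm.le
  have htne : ttF m N ≠ 0 := ht0.ne'
  have hsne : s N ≠ 0 := hs0.ne'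
  have hsig : sigN N (m N) (s N) = ttF m N / s N := by
    rw [sigN, ttF, one_div, inv_mul_eq_div]
  have hstep : 1 / sigN N (m N) (s N) = hhF m s N := by
    rw [hsig, one_div_div, hhF]
  have hhne : (hhF m s N)^2 ≠ 0 := by
    rw [hhF]; positivity
  have hsq1 : Real.sqrt ((m N/s N)*(N:ℝ)/(s N)) = ttF m N / s N := by
    rw [show (m N/s N)*(N:ℝ)/(s N) = ((N:ℝ)*m N)/(s N)^2 from by field_simp,
      Real.sqrt_div hNm.le, Real.sqrt_sq hs0.le, ttF]
  have hsq2 : Real.sqrt (m N/s N) / Real.sqrt (s N * (N:ℝ)) = ttF m N / (s N * (N:ℝ)) := by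
    rw [← Real.sqrt_div (by positivity : (0:ℝ) ≤ m N/s N),
      show (m N/s N)/(s N*(N:ℝ)) = ((N:ℝ)*m N)/(s N*(N:ℝ))^2 from by field_simp,
      Real.sqrt_div hNm.le, Real.sqrt_sq (by positivity), ttF]
  have hbeta : betaN N (m N) (s N) x = BBF m s x N / (hhF m s N)^2 := by
    rw [eq_div_iff hhne, betaN, hsq1, mul_div_assoc x, hsq2, hhF, BBF, aaF, ccF]
    exact alg_beta (m N) (s N) x (ttF m N) (N:ℝ) hm hms ht0 hN0 ht2
  have hdelta : deltaN N (m N) (s N) x = DDF m s x N / (hhF m s N)^2 := by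
    rw [eq_div_iff hhne, deltaN, hsq1, mul_div_assoc x, hsq2, hhF, DDF, aaF, ccF]
    exact alg_delta (m N) (s N) x (ttF m N) (N:ℝ) hm hms ht0 hN0 ht2
  rw [hstep, hbeta, hdelta]
  simp only [BBF, DDF, EPF, EMF, ccF, hhF]
  exact alg_T (s N) (ttF m N) x (aaF m s N) _ _ _ _ hsne htne

theorem stmt16 (m s : ℕ → ℝ)
    (hms : ∀ N, 0 < m N ∧ m N < s N)
    (hNm : Filter.Tendsto (fun N : ℕ => (N:ℝ) * m N) Filter.atTop Filter.atTop)
    (hs0 : Filter.Tendsto s Filter.atTop (nhds 0))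
    (hρlim : ∃ ρs ∈ Set.Ioc (0:ℝ) 1,
      Filter.Tendsto (fun N => m N / s N) Filter.atTop (nhds ρs))
    (hu : Filter.Tendsto (fun N : ℕ => uN N (m N) (s N)) Filter.atTop Filter.atTop)
    (f : ℝ → ℝ) (hf : ContDiff ℝ 3 f)
    (hb1 : ∃ C, ∀ x, |deriv f x| ≤ C)
    (hb2 : ∃ C, ∀ x, |deriv (deriv f) x| ≤ C)
    (hb3 : ∃ C, ∀ x, |deriv (deriv (deriv f)) x| ≤ C)
    (x : ℝ) :
    Filter.Tendsto (fun N : ℕ =>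
      betaN N (m N) (s N) x * (f (x + 1 / sigN N (m N) (s N)) - f x) +
        deltaN N (m N) (s N) x * (f (x - 1 / sigN N (m N) (s N)) - f x))
      Filter.atTop (nhds (-x * deriv f x + (1/2) * deriv (deriv f) x)) := by
  obtain ⟨ρs, hρmem, hρ⟩ := hρlim
  obtain ⟨C, hC⟩ := hb3
  have hC0 : 0 ≤ C := le_trans (abs_nonneg _) (hC 0)
  -- basic limits
  have htt : Filter.Tendsto (ttF m) Filter.atTop Filter.atTop := by
    exact my_sqrt_atTop.comp hNm
  have hcc : Filter.Tendsto (ccF m) Filter.atTop (nhds 0) := by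
    refine htt.inv_tendsto_atTop.congr fun N => ?_
    simp [ccF, one_div]
  have hhh : Filter.Tendsto (hhF m s) Filter.atTop (nhds 0) := by
    have := hs0.mul htt.inv_tendsto_atTop
    rw [mul_zero] at this
    refine this.congr (fun N => ?_)
    simp [hhF, div_eq_mul_inv]
  have haa : Filter.Tendsto (aaF m s) Filter.atTop (nhds 0) := by
    have hsu : Filter.Tendsto (fun N => Real.sqrt (uN N (m N) (s N))) Filter.atTop
        Filter.atTop := my_sqrt_atTop.comp hu
    have h2 : Filter.Tendsto (fun N => (m N / s N) * (Real.sqrt (uN N (m N) (s N)))⁻¹)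
        Filter.atTop (nhds (ρs * 0)) := hρ.mul hsu.inv_tendsto_atTop
    rw [mul_zero] at h2
    refine h2.congr' ?_
    filter_upwards [Filter.eventually_ge_atTop 1] with N hN
    have hm := (hms N).1
    have hmsN := (hms N).2
    have hs0' : 0 < s N := hm.trans hmsN
    have hN0 : (0:ℝ) < (N:ℝ) := by exact_mod_cast hN
    have hNm' : 0 < (N:ℝ) * m N := by positivity
    have ht0 : 0 < ttF m N := Real.sqrt_pos.mpr hNm'
    have ht2 : ttF m N ^ 2 = (N:ℝ) * m N := Real.sq_sqrt hNm'.le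
    have h1ρ : 0 < 1 - m N / s N := by
      have : m N / s N < 1 := (div_lt_one hs0').mpr hmsN
      linarith
    have hus : Real.sqrt (uN N (m N) (s N)) = ttF m N * (1 - m N / s N) := by
      rw [uN, Real.sqrt_mul hNm'.le, Real.sqrt_sq h1ρ.le, ttF]
    rw [hus, aaF]
    have hne : ttF m N ≠ 0 := ht0.ne'
    have hsm : s N - m N ≠ 0 := by linarith
    rw [show 1 - m N / s N = (s N - m N)/s N from by field_simp]
    field_simp
    linear_combination (-1) * ht2
  -- EP, EM limits
  have hCh : Filter.Tendsto (fun N => C * |hhF m s N|) Filter.atTop (nhds 0) := by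
    have := hhh.abs.const_mul C
    simpa using this
  have hEP : Filter.Tendsto (EPF f m s x) Filter.atTop (nhds 0) := by
    apply squeeze_zero_norm' _ hCh
    filter_upwards [Filter.eventually_ge_atTop 1] with N hN
    have hm := (hms N).1
    have hs0' : 0 < s N := hm.trans (hms N).2
    have hN0 : (0:ℝ) < (N:ℝ) := by exact_mod_cast hN
    have hNm' : 0 < (N:ℝ) * m N := by positivity
    have ht0 : 0 < ttF m N := Real.sqrt_pos.mpr hNm'
    have hh0 : 0 < hhF m s N := by rw [hhF]; positivity
    have hb := taylor2 f hf C hC x (hhF m s N)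
    rw [EPF, Real.norm_eq_abs, abs_div]
    rw [div_le_iff₀ (by positivity : (0:ℝ) < |(hhF m s N)^2|)]
    calc |f (x + hhF m s N) - f x - hhF m s N * deriv f x
          - (hhF m s N)^2/2 * deriv (deriv f) x| ≤ C * |hhF m s N| ^ 3 := hb
      _ = C * |hhF m s N| * |(hhF m s N)^2| := by
          rw [abs_pow]; ring
  have hEM : Filter.Tendsto (EMF f m s x) Filter.atTop (nhds 0) := by
    apply squeeze_zero_norm' _ hCh
    filter_upwards [Filter.eventually_ge_atTop 1] with N hN
    have hm := (hms N).1
    have hs0' : 0 < s N := hm.trans (hms N).2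
    have hN0 : (0:ℝ) < (N:ℝ) := by exact_mod_cast hN
    have hNm' : 0 < (N:ℝ) * m N := by positivity
    have ht0 : 0 < ttF m N := Real.sqrt_pos.mpr hNm'
    have hh0 : 0 < hhF m s N := by rw [hhF]; positivity
    have hb := taylor2 f hf C hC x (-(hhF m s N))
    rw [show x + -(hhF m s N) = x - hhF m s N from by ring] at hb
    rw [show f (x - hhF m s N) - f x - -(hhF m s N) * deriv f x
        - (-(hhF m s N)) ^ 2 / 2 * deriv (deriv f) x
        = f (x - hhF m s N) - f x + hhF m s N * deriv f x
          - (hhF m s N) ^ 2 / 2 * deriv (deriv f) x from by ring, abs_neg] at hb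
    rw [EMF, Real.norm_eq_abs, abs_div]
    rw [div_le_iff₀ (by positivity : (0:ℝ) < |(hhF m s N)^2|)]
    calc |f (x - hhF m s N) - f x + hhF m s N * deriv f x
          - (hhF m s N)^2/2 * deriv (deriv f) x| ≤ C * |hhF m s N| ^ 3 := hb
      _ = C * |hhF m s N| * |(hhF m s N)^2| := by
          rw [abs_pow]; ring
  -- BB, DD limits
  have hBB : Filter.Tendsto (BBF m s x) Filter.atTop (nhds (1/2)) := by
    have h1 : Filter.Tendsto (fun N => 1/2 + s N) Filter.atTop (nhds (1/2 + 0)) :=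
      tendsto_const_nhds.add hs0
    have h2 : Filter.Tendsto (fun N => 1 - x * ccF m N) Filter.atTop (nhds (1 - x * 0)) :=
      tendsto_const_nhds.sub (hcc.const_mul x)
    have h3 : Filter.Tendsto (fun N => 1 + x * aaF m s N) Filter.atTop (nhds (1 + x * 0)) :=
      tendsto_const_nhds.add (haa.const_mul x)
    have := (h1.mul h2).mul h3
    simp only [add_zero, mul_zero, sub_zero, mul_one] at this
    exact this
  have hDD : Filter.Tendsto (DDF m s x) Filter.atTop (nhds (1/2)) := by
    have h2 : Filter.Tendsto (fun N => (1/2) * (1 - x * ccF m N) + s N) Filter.atTop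
        (nhds ((1/2) * (1 - x * 0) + 0)) :=
      ((tendsto_const_nhds.sub (hcc.const_mul x)).const_mul (1/2)).add hs0
    have h3 : Filter.Tendsto (fun N => 1 + x * aaF m s N) Filter.atTop (nhds (1 + x * 0)) :=
      tendsto_const_nhds.add (haa.const_mul x)
    have := h2.mul h3
    simp only [add_zero, mul_zero, sub_zero, mul_one] at this
    exact this
  -- target limit
  have hT : Filter.Tendsto (fun N =>
      -x*(1 + x*aaF m s N) * deriv f x
      + ((BBF m s x N + DDF m s x N)/2) * deriv (deriv f) x
      + BBF m s x N * EPF f m s x N + DDF m s x N * EMF f m s x N)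
      Filter.atTop (nhds (-x * deriv f x + (1/2) * deriv (deriv f) x)) := by
    have t1 : Filter.Tendsto (fun N => -x*(1 + x*aaF m s N) * deriv f x) Filter.atTop
        (nhds (-x * (1 + x * 0) * deriv f x)) :=
      ((tendsto_const_nhds.add (haa.const_mul x)).const_mul (-x)).mul_const _
    have t2 : Filter.Tendsto (fun N => ((BBF m s x N + DDF m s x N)/2) * deriv (deriv f) x)
        Filter.atTop (nhds (((1/2 + 1/2)/2) * deriv (deriv f) x)) :=
      ((hBB.add hDD).div_const 2).mul_const _
    have t3 := hBB.mul hEP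
    have t4 := hDD.mul hEM
    rw [mul_zero] at t3 t4
    have := ((t1.add t2).add t3).add t4
    simp only [mul_zero, add_zero] at this
    convert this using 2
    norm_num
  refine hT.congr' ?_
  filter_upwards [Filter.eventually_ge_atTop 1] with N hN
  exact (key_eq m s x f N hN (hms N).1 (hms N).2).symm
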